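/- arXiv:2506.04176 — 7 statements merged into one kernel-verified Lean document; each statement's English description precedes it below -/
import Mathlib

section
/- For every j ∈ ℤ the minmod slopes satisfy: (i) σ_j · σ_{j+1} ≥ 0; (ii) |σ_{j+1} − σ_j| ≤ max(|σ_{j+1}|, |σ_j|); and (iii) |σ_{j+1} − σ_j| ≤ 2θ · |ρ_{j+1} − ρ_j|, so that whenever ρ_{j+1} ≠ ρ_j one has |(σ_{j+1} − σ_j)/(ρ_{j+1} − ρ_j)| ≤ 2θ. -/
open MeasureTheory

noncomputable section

/-- minmod limiter of three arguments. -/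
def minmod3 (a b c : ℝ) : ℝ :=
  if 0 < a ∧ 0 < b ∧ 0 < c then min a (min b c)
  else if a < 0 ∧ b < 0 ∧ c < 0 then max a (max b c)
  else 0

/-- MUSCL slopes `σ_j = 2θ·minmod(ρ_j − ρ_{j−1}, (ρ_{j+1} − ρ_{j−1})/2, ρ_{j+1} − ρ_j)`. -/
def slp (θ : ℝ) (ρ : ℤ → ℝ) (j : ℤ) : ℝ :=
  2 * θ * minmod3 (ρ j - ρ (j - 1)) ((ρ (j + 1) - ρ (j - 1)) / 2) (ρ (j + 1) - ρ j)

/-- left interface value `ρ⁻_{j+1/2} = ρ_j + σ_j/2`. -/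
def intL (θ : ℝ) (ρ : ℤ → ℝ) (j : ℤ) : ℝ := ρ j + slp θ ρ j / 2

/-- right interface value `ρ⁺_{j−1/2} = ρ_j − σ_j/2`. -/
def intR (θ : ℝ) (ρ : ℤ → ℝ) (j : ℤ) : ℝ := ρ j - slp θ ρ j / 2

/-- discrete convolution `A_j = Δx·Σ_l μ((j−l)Δx)·ρ_l`. -/
def Adisc (μ : ℝ → ℝ) (Δx : ℝ) (ρ : ℤ → ℝ) (j : ℤ) : ℝ :=
  Δx * ∑' l : ℤ, μ (((j : ℝ) - (l : ℝ)) * Δx) * ρ l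

/-- `s_j = θ·(A_{j+1} − A_{j−1})`. -/
def sdisc (μ : ℝ → ℝ) (θ Δx : ℝ) (ρ : ℤ → ℝ) (j : ℤ) : ℝ :=
  θ * (Adisc μ Δx ρ (j + 1) - Adisc μ Δx ρ (j - 1))

/-- `A⁻_{j+1/2} = A_j + s_j/2`. -/
def AdiscL (μ : ℝ → ℝ) (θ Δx : ℝ) (ρ : ℤ → ℝ) (j : ℤ) : ℝ :=
  Adisc μ Δx ρ j + sdisc μ θ Δx ρ j / 2

/-- `A⁺_{j−1/2} = A_j − s_j/2`. -/
def AdiscR (μ : ℝ → ℝ) (θ Δx : ℝ) (ρ : ℤ → ℝ) (j : ℤ) : ℝ :=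
  Adisc μ Δx ρ j - sdisc μ θ Δx ρ j / 2

/-- mid-time value `ρ^{½,−}_{j+1/2}`. -/
def midL (f : ℝ → ℝ → ℝ) (μ : ℝ → ℝ) (θ lam Δx : ℝ) (ρ : ℤ → ℝ) (j : ℤ) : ℝ :=
  intL θ ρ j - lam / 2 *
    (f (intL θ ρ j) (AdiscL μ θ Δx ρ j) - f (intR θ ρ j) (AdiscR μ θ Δx ρ j))

/-- mid-time value `ρ^{½,+}_{j−1/2}`. -/
def midR (f : ℝ → ℝ → ℝ) (μ : ℝ → ℝ) (θ lam Δx : ℝ) (ρ : ℤ → ℝ) (j : ℤ) : ℝ :=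
  intR θ ρ j - lam / 2 *
    (f (intL θ ρ j) (AdiscL μ θ Δx ρ j) - f (intR θ ρ j) (AdiscR μ θ Δx ρ j))

/-- mid-time convolution `A^{½}_{j+1/2}`. -/
def Amid (f : ℝ → ℝ → ℝ) (μ : ℝ → ℝ) (θ lam Δx : ℝ) (ρ : ℤ → ℝ) (j : ℤ) : ℝ :=
  Δx / 2 * ∑' l : ℤ,
    (μ (((j : ℝ) + 1 - (l : ℝ)) * Δx) * midR f μ θ lam Δx ρ l +
     μ (((j : ℝ) - (l : ℝ)) * Δx) * midL f μ θ lam Δx ρ l)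

/-- Lax–Friedrichs type numerical flux `F(u,v,A)`. -/
def numFlux (f : ℝ → ℝ → ℝ) (α lam u v A : ℝ) : ℝ :=
  (f u A + f v A) / 2 - α * (v - u) / (2 * lam)

/-- MUSCL–Hancock update `ρ'_j`. -/
def mhUpdate (f : ℝ → ℝ → ℝ) (μ : ℝ → ℝ) (θ α lam Δx : ℝ) (ρ : ℤ → ℝ) (j : ℤ) : ℝ :=
  ρ j - lam *
    (numFlux f α lam (midL f μ θ lam Δx ρ j) (midR f μ θ lam Δx ρ (j + 1))
        (Amid f μ θ lam Δx ρ j) -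
     numFlux f α lam (midL f μ θ lam Δx ρ (j - 1)) (midR f μ θ lam Δx ρ j)
        (Amid f μ θ lam Δx ρ (j - 1)))

lemma mm3_last (a b d : ℝ) (h : 0 ≤ d) : 0 ≤ minmod3 a b d ∧ minmod3 a b d ≤ d := by
  unfold minmod3
  split_ifs with h1 h2
  · refine ⟨?_, (min_le_right _ _).trans (min_le_right _ _)⟩
    exact le_min h1.1.le (le_min h1.2.1.le h1.2.2.le)
  · exact absurd h2.2.2 (not_lt.2 h)
  · exact ⟨le_rfl, h⟩

lemma mm3_first (d b c : ℝ) (h : 0 ≤ d) : 0 ≤ minmod3 d b c ∧ minmod3 d b c ≤ d := by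
  unfold minmod3
  split_ifs with h1 h2
  · refine ⟨?_, min_le_left _ _⟩
    exact le_min h1.1.le (le_min h1.2.1.le h1.2.2.le)
  · exact absurd h2.1 (not_lt.2 h)
  · exact ⟨le_rfl, h⟩

lemma mm3_last_neg (a b d : ℝ) (h : d ≤ 0) : d ≤ minmod3 a b d ∧ minmod3 a b d ≤ 0 := by
  unfold minmod3
  split_ifs with h1 h2
  · exact absurd h1.2.2 (not_lt.2 h)
  · refine ⟨(le_max_right _ _).trans (le_max_right _ _), ?_⟩
    exact max_le h2.1.le (max_le h2.2.1.le h2.2.2.le)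
  · exact ⟨h, le_rfl⟩

lemma mm3_first_neg (d b c : ℝ) (h : d ≤ 0) : d ≤ minmod3 d b c ∧ minmod3 d b c ≤ 0 := by
  unfold minmod3
  split_ifs with h1 h2
  · exact absurd h1.1 (not_lt.2 h)
  · refine ⟨le_max_left _ _, ?_⟩
    exact max_le h2.1.le (max_le h2.2.1.le h2.2.2.le)
  · exact ⟨h, le_rfl⟩

lemma stmt0_core (x y D : ℝ) (hx0 : 0 ≤ x) (hxD : x ≤ D) (hy0 : 0 ≤ y) (hyD : y ≤ D) :
    0 ≤ x * y ∧ |y - x| ≤ max |y| |x| ∧ |y - x| ≤ |D| := by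
  have hD : 0 ≤ D := hx0.trans hxD
  refine ⟨mul_nonneg hx0 hy0, ?_, ?_⟩
  · rw [abs_of_nonneg hy0, abs_of_nonneg hx0, abs_le]
    have h1 := le_max_left y x
    have h2 := le_max_right y x
    constructor <;> linarith
  · rw [abs_of_nonneg hD, abs_le]
    constructor <;> linarith

/-- basic properties of the minmod slopes. -/
theorem stmt0 (θ : ℝ) (hθ0 : 0 ≤ θ) (hθ1 : θ ≤ 1 / 2) (ρ : ℤ → ℝ) (j : ℤ) :
    0 ≤ slp θ ρ j * slp θ ρ (j + 1) ∧
    |slp θ ρ (j + 1) - slp θ ρ j| ≤ max |slp θ ρ (j + 1)| |slp θ ρ j| ∧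
    |slp θ ρ (j + 1) - slp θ ρ j| ≤ 2 * θ * |ρ (j + 1) - ρ j| ∧
    (ρ (j + 1) ≠ ρ j →
      |(slp θ ρ (j + 1) - slp θ ρ j) / (ρ (j + 1) - ρ j)| ≤ 2 * θ) := by
  set d : ℝ := ρ (j + 1) - ρ j with hd
  have hθ : (0:ℝ) ≤ 2 * θ := by linarith
  have e1 : slp θ ρ j = 2 * θ *
      minmod3 (ρ j - ρ (j - 1)) ((ρ (j + 1) - ρ (j - 1)) / 2) d := rfl
  have e2 : slp θ ρ (j + 1) = 2 * θ *
      minmod3 d ((ρ (j + 1 + 1) - ρ j) / 2) (ρ (j + 1 + 1) - ρ (j + 1)) := by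
    have : (j + 1) - 1 = j := by ring
    simp [slp, this, hd]
  set m1 := minmod3 (ρ j - ρ (j - 1)) ((ρ (j + 1) - ρ (j - 1)) / 2) d with hm1
  set m2 := minmod3 d ((ρ (j + 1 + 1) - ρ j) / 2) (ρ (j + 1 + 1) - ρ (j + 1)) with hm2
  have key : 0 ≤ slp θ ρ j * slp θ ρ (j + 1) ∧
      |slp θ ρ (j + 1) - slp θ ρ j| ≤ max |slp θ ρ (j + 1)| |slp θ ρ j| ∧
      |slp θ ρ (j + 1) - slp θ ρ j| ≤ 2 * θ * |d| := by
    rcases le_total 0 d with hdp | hdn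
    · obtain ⟨h10, h1D⟩ := mm3_last (ρ j - ρ (j - 1)) ((ρ (j + 1) - ρ (j - 1)) / 2) d hdp
      obtain ⟨h20, h2D⟩ := mm3_first d ((ρ (j + 1 + 1) - ρ j) / 2)
        (ρ (j + 1 + 1) - ρ (j + 1)) hdp
      obtain ⟨c1, c2, c3⟩ := stmt0_core (2 * θ * m1) (2 * θ * m2) (2 * θ * d)
        (mul_nonneg hθ h10) (mul_le_mul_of_nonneg_left h1D hθ)
        (mul_nonneg hθ h20) (mul_le_mul_of_nonneg_left h2D hθ)
      rw [e1, e2]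
      refine ⟨c1, c2, c3.trans_eq ?_⟩
      rw [abs_mul, abs_of_nonneg hθ]
    · obtain ⟨h1D, h10⟩ := mm3_last_neg (ρ j - ρ (j - 1)) ((ρ (j + 1) - ρ (j - 1)) / 2) d hdn
      obtain ⟨h2D, h20⟩ := mm3_first_neg d ((ρ (j + 1 + 1) - ρ j) / 2)
        (ρ (j + 1 + 1) - ρ (j + 1)) hdn
      obtain ⟨c1, c2, c3⟩ := stmt0_core (-(2 * θ * m1)) (-(2 * θ * m2)) (-(2 * θ * d))
        (by nlinarith) (by nlinarith) (by nlinarith) (by nlinarith)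
      rw [e1, e2]
      have eabs : |-(2 * θ * m2) - -(2 * θ * m1)| = |2 * θ * m2 - 2 * θ * m1| := by
        rw [← abs_neg]; ring_nf
      rw [eabs] at c2 c3
      simp only [abs_neg] at c2 c3
      refine ⟨by nlinarith, c2, c3.trans_eq ?_⟩
      rw [abs_mul, abs_of_nonneg hθ]
  obtain ⟨c1, c2, c3⟩ := key
  refine ⟨c1, c2, c3, fun hne => ?_⟩
  have hdne : d ≠ 0 := sub_ne_zero.2 hne
  rw [abs_div, div_le_iff₀ (abs_pos.2 hdne)]
  linarith [c3]
end
end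

section
/- For every j ∈ ℤ with ρ_{j+1} ≠ ρ_j, the interface increments satisfy 1 − θ ≤ (ρ⁻_{j+3/2} − ρ⁻_{j+1/2})/(ρ_{j+1} − ρ_j) ≤ 1 + θ and 1 − θ ≤ (ρ⁺_{j+1/2} − ρ⁺_{j−1/2})/(ρ_{j+1} − ρ_j) ≤ 1 + θ; in particular, since θ ≤ 1/2, both quotients lie in the interval [1/2, 1 + θ]. -/
open MeasureTheory

noncomputable section

lemma mm_pos_c (a b c : ℝ) (hc : 0 < c) : 0 ≤ minmod3 a b c ∧ minmod3 a b c ≤ c := by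
  unfold minmod3; split_ifs with h1 h2
  · exact ⟨le_min h1.1.le (le_min h1.2.1.le h1.2.2.le),
      (min_le_right _ _).trans (min_le_right _ _)⟩
  · linarith [h2.2.2]
  · exact ⟨le_rfl, hc.le⟩

lemma mm_neg_c (a b c : ℝ) (hc : c < 0) : c ≤ minmod3 a b c ∧ minmod3 a b c ≤ 0 := by
  unfold minmod3; split_ifs with h1 h2
  · linarith [h1.2.2]
  · exact ⟨(le_max_right b c).trans (le_max_right a (max b c)),
      max_le h2.1.le (max_le h2.2.1.le h2.2.2.le)⟩
  · exact ⟨hc.le, le_rfl⟩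

lemma mm_pos_a (a b c : ℝ) (ha : 0 < a) : 0 ≤ minmod3 a b c ∧ minmod3 a b c ≤ a := by
  unfold minmod3; split_ifs with h1 h2
  · exact ⟨le_min h1.1.le (le_min h1.2.1.le h1.2.2.le), min_le_left _ _⟩
  · linarith [h2.1]
  · exact ⟨le_rfl, ha.le⟩

lemma mm_neg_a (a b c : ℝ) (ha : a < 0) : a ≤ minmod3 a b c ∧ minmod3 a b c ≤ 0 := by
  unfold minmod3; split_ifs with h1 h2
  · linarith [h1.1]
  · exact ⟨le_max_left _ _, max_le h2.1.le (max_le h2.2.1.le h2.2.2.le)⟩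
  · exact ⟨ha.le, le_rfl⟩

/-- bounds on the interface increment quotients. -/
theorem stmt1 (θ : ℝ) (hθ0 : 0 ≤ θ) (hθ1 : θ ≤ 1 / 2) (ρ : ℤ → ℝ) (j : ℤ)
    (hne : ρ (j + 1) ≠ ρ j) :
    (1 - θ ≤ (intL θ ρ (j + 1) - intL θ ρ j) / (ρ (j + 1) - ρ j) ∧
      (intL θ ρ (j + 1) - intL θ ρ j) / (ρ (j + 1) - ρ j) ≤ 1 + θ) ∧
    (1 - θ ≤ (intR θ ρ (j + 1) - intR θ ρ j) / (ρ (j + 1) - ρ j) ∧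
      (intR θ ρ (j + 1) - intR θ ρ j) / (ρ (j + 1) - ρ j) ≤ 1 + θ) ∧
    1 / 2 ≤ (intL θ ρ (j + 1) - intL θ ρ j) / (ρ (j + 1) - ρ j) ∧
    1 / 2 ≤ (intR θ ρ (j + 1) - intR θ ρ j) / (ρ (j + 1) - ρ j) := by
  have hj : j + 1 - 1 = j := by ring
  have hΔ : ρ (j+1) - ρ j ≠ 0 := sub_ne_zero.mpr hne
  set m1 := minmod3 (ρ j - ρ (j-1)) ((ρ (j+1) - ρ (j-1))/2) (ρ (j+1) - ρ j) with hm1def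
  set m2 := minmod3 (ρ (j+1) - ρ j) ((ρ (j+1+1) - ρ j)/2) (ρ (j+1+1) - ρ (j+1)) with hm2def
  have e1 : slp θ ρ j = 2*θ*m1 := rfl
  have e2 : slp θ ρ (j+1) = 2*θ*m2 := by
    rw [slp, hj, hm2def]
  have hLq : (intL θ ρ (j + 1) - intL θ ρ j) / (ρ (j + 1) - ρ j)
      = ((ρ (j+1) - ρ j) + θ*(m2 - m1)) / (ρ (j + 1) - ρ j) := by
    rw [intL, intL, e1, e2]; ring_nf
  have hRq : (intR θ ρ (j + 1) - intR θ ρ j) / (ρ (j + 1) - ρ j)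
      = ((ρ (j+1) - ρ j) - θ*(m2 - m1)) / (ρ (j + 1) - ρ j) := by
    rw [intR, intR, e1, e2]; ring_nf
  rcases hΔ.lt_or_gt with h | h
  · have hd : ρ (j+1) - ρ j < 0 := by linarith [sub_neg.mpr (show ρ (j+1) < ρ j from by
      by_contra hc; push_neg at hc; rcases hc.lt_or_eq with h'|h'
      · linarith [sub_pos.mpr h']
      · exact hne h'.symm)]
    have b1 := mm_neg_c (ρ j - ρ (j-1)) ((ρ (j+1) - ρ (j-1))/2) (ρ (j+1) - ρ j) hd
    have b2 := mm_neg_a (ρ (j+1) - ρ j) ((ρ (j+1+1) - ρ j)/2) (ρ (j+1+1) - ρ (j+1)) hd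
    rw [← hm1def] at b1; rw [← hm2def] at b2
    have hL1 : 1 - θ ≤ (intL θ ρ (j + 1) - intL θ ρ j) / (ρ (j + 1) - ρ j) := by
      rw [hLq, le_div_iff_of_neg hd]; nlinarith [b1.1, b2.2]
    have hL2 : (intL θ ρ (j + 1) - intL θ ρ j) / (ρ (j + 1) - ρ j) ≤ 1 + θ := by
      rw [hLq, div_le_iff_of_neg hd]; nlinarith [b1.2, b2.1]
    have hR1 : 1 - θ ≤ (intR θ ρ (j + 1) - intR θ ρ j) / (ρ (j + 1) - ρ j) := by
      rw [hRq, le_div_iff_of_neg hd]; nlinarith [b1.2, b2.1]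
    have hR2 : (intR θ ρ (j + 1) - intR θ ρ j) / (ρ (j + 1) - ρ j) ≤ 1 + θ := by
      rw [hRq, div_le_iff_of_neg hd]; nlinarith [b1.1, b2.2]
    exact ⟨⟨hL1, hL2⟩, ⟨hR1, hR2⟩, by linarith, by linarith⟩
  · have hd : 0 < ρ (j+1) - ρ j := h
    have b1 := mm_pos_c (ρ j - ρ (j-1)) ((ρ (j+1) - ρ (j-1))/2) (ρ (j+1) - ρ j) hd
    have b2 := mm_pos_a (ρ (j+1) - ρ j) ((ρ (j+1+1) - ρ j)/2) (ρ (j+1+1) - ρ (j+1)) hd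
    rw [← hm1def] at b1; rw [← hm2def] at b2
    have hL1 : 1 - θ ≤ (intL θ ρ (j + 1) - intL θ ρ j) / (ρ (j + 1) - ρ j) := by
      rw [hLq, le_div_iff₀ hd]; nlinarith [b1.2, b2.1]
    have hL2 : (intL θ ρ (j + 1) - intL θ ρ j) / (ρ (j + 1) - ρ j) ≤ 1 + θ := by
      rw [hLq, div_le_iff₀ hd]; nlinarith [b1.1, b2.2]
    have hR1 : 1 - θ ≤ (intR θ ρ (j + 1) - intR θ ρ j) / (ρ (j + 1) - ρ j) := by
      rw [hRq, le_div_iff₀ hd]; nlinarith [b1.1, b2.2]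
    have hR2 : (intR θ ρ (j + 1) - intR θ ρ j) / (ρ (j + 1) - ρ j) ≤ 1 + θ := by
      rw [hRq, div_le_iff₀ hd]; nlinarith [b1.2, b2.1]
    exact ⟨⟨hL1, hL2⟩, ⟨hR1, hR2⟩, by linarith, by linarith⟩
end
end

section
/- (Bound on reconstructed values.) If ρ_j ≥ 0 for all j ∈ ℤ, then for every j ∈ ℤ the interface values satisfy 0 ≤ ρ⁻_{j+1/2} ≤ (1 + θ)·ρ_j and 0 ≤ ρ⁺_{j−1/2} ≤ (1 + θ)·ρ_j; in particular |ρ⁻_{j+1/2}| ≤ (1 + θ)·ρ_j and |ρ⁺_{j−1/2}| ≤ (1 + θ)·ρ_j. -/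
open MeasureTheory

noncomputable section

/-- bound on the reconstructed interface values. -/
theorem stmt2 (θ : ℝ) (hθ0 : 0 ≤ θ) (hθ1 : θ ≤ 1 / 2) (ρ : ℤ → ℝ)
    (hρ : ∀ j : ℤ, 0 ≤ ρ j) (j : ℤ) :
    (0 ≤ intL θ ρ j ∧ intL θ ρ j ≤ (1 + θ) * ρ j) ∧
    (0 ≤ intR θ ρ j ∧ intR θ ρ j ≤ (1 + θ) * ρ j) ∧
    |intL θ ρ j| ≤ (1 + θ) * ρ j ∧ |intR θ ρ j| ≤ (1 + θ) * ρ j := by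
  have hm : -ρ j ≤ minmod3 (ρ j - ρ (j - 1)) ((ρ (j + 1) - ρ (j - 1)) / 2) (ρ (j + 1) - ρ j)
      ∧ minmod3 (ρ j - ρ (j - 1)) ((ρ (j + 1) - ρ (j - 1)) / 2) (ρ (j + 1) - ρ j) ≤ ρ j := by
    have h1 := hρ (j - 1)
    have h2 := hρ j
    have h3 := hρ (j + 1)
    unfold minmod3
    split_ifs with h h'
    · obtain ⟨ha, hb, hc⟩ := h
      constructor
      · have : (0:ℝ) < min (ρ j - ρ (j - 1)) (min ((ρ (j + 1) - ρ (j - 1)) / 2) (ρ (j + 1) - ρ j)) := by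
          simp [lt_min_iff, ha, hb, hc]
        linarith
      · have := min_le_left (ρ j - ρ (j - 1)) (min ((ρ (j + 1) - ρ (j - 1)) / 2) (ρ (j + 1) - ρ j))
        linarith
    · obtain ⟨ha, hb, hc⟩ := h'
      constructor
      · have := le_max_right ((ρ (j + 1) - ρ (j - 1)) / 2) (ρ (j + 1) - ρ j)
        have := le_max_right (ρ j - ρ (j - 1)) (max ((ρ (j + 1) - ρ (j - 1)) / 2) (ρ (j + 1) - ρ j))
        have hcr : ρ (j + 1) - ρ j ≤ max (ρ j - ρ (j - 1)) (max ((ρ (j + 1) - ρ (j - 1)) / 2) (ρ (j + 1) - ρ j)) :=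
          le_trans (le_max_right _ _) (le_max_right _ _)
        linarith
      · have : max (ρ j - ρ (j - 1)) (max ((ρ (j + 1) - ρ (j - 1)) / 2) (ρ (j + 1) - ρ j)) < 0 := by
          simp [max_lt_iff, ha, hb, hc]
        linarith
    · constructor <;> linarith
  have h2 := hρ j
  have hθ1' : θ ≤ 1 := by linarith
  have hL0 : 0 ≤ intL θ ρ j := by
    unfold intL slp; nlinarith [hm.1, hm.2]
  have hL1 : intL θ ρ j ≤ (1 + θ) * ρ j := by
    unfold intL slp; nlinarith [hm.1, hm.2]
  have hR0 : 0 ≤ intR θ ρ j := by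
    unfold intR slp; nlinarith [hm.1, hm.2]
  have hR1 : intR θ ρ j ≤ (1 + θ) * ρ j := by
    unfold intR slp; nlinarith [hm.1, hm.2]
  refine ⟨⟨hL0, hL1⟩, ⟨hR0, hR1⟩, ?_, ?_⟩
  · rw [abs_of_nonneg hL0]; exact hL1
  · rw [abs_of_nonneg hR0]; exact hR1
end
end

section
/- (Bound on mid-time density values.) For every j ∈ ℤ, the mid-time values satisfy |ρ^{½,−}_{j+1/2}| ≤ (1 + θ)·(1 + λ·L)·ρ_j and |ρ^{½,+}_{j−1/2}| ≤ (1 + θ)·(1 + λ·L)·ρ_j. -/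
open MeasureTheory

noncomputable section

/-! Since the cell averages are nonnegative, a positive minmod slope is at most `ρ_j - ρ_{j-1} ≤ ρ_j`
and a negative one at least `ρ_{j+1} - ρ_j ≥ -ρ_j`, so both interface values have modulus at most
`(1 + θ) ρ_j`. As `f(·, A)` vanishes at `0` and is `L`-Lipschitz, each flux in the half-step
correction is then at most `L (1 + θ) ρ_j`. -/

lemma abs_minmod3_sub_le {rm r rp : ℝ} (b : ℝ) (hm : 0 ≤ rm) (h : 0 ≤ r) (hp : 0 ≤ rp) :
    |minmod3 (r - rm) b (rp - r)| ≤ r := by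
  unfold minmod3
  split_ifs with hpos hneg
  · rw [abs_of_pos (lt_min hpos.1 (lt_min hpos.2.1 hpos.2.2))]
    linarith [min_le_left (r - rm) (min b (rp - r))]
  · rw [abs_of_neg (max_lt hneg.1 (max_lt hneg.2.1 hneg.2.2))]
    linarith [le_max_right b (rp - r), le_max_right (r - rm) (max b (rp - r))]
  · simpa using h

section Reconstruction

variable {θ : ℝ} {ρ : ℤ → ℝ}

lemma abs_slp_le (hθ : 0 ≤ θ) (hρ : ∀ j, 0 ≤ ρ j) (j : ℤ) : |slp θ ρ j| ≤ 2 * θ * ρ j := by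
  rw [slp, abs_mul, abs_of_nonneg (by positivity : 0 ≤ 2 * θ)]
  exact mul_le_mul_of_nonneg_left (abs_minmod3_sub_le _ (hρ _) (hρ _) (hρ _)) (by positivity)

lemma abs_intL_le (hθ : 0 ≤ θ) (hρ : ∀ j, 0 ≤ ρ j) (j : ℤ) : |intL θ ρ j| ≤ (1 + θ) * ρ j := by
  have := abs_slp_le hθ hρ j
  calc |intL θ ρ j| ≤ |ρ j| + |slp θ ρ j| / 2 := by
        rw [intL, ← abs_two, ← abs_div, abs_two]; exact abs_add_le _ _
    _ ≤ (1 + θ) * ρ j := by rw [abs_of_nonneg (hρ j)]; linarith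

lemma abs_intR_le (hθ : 0 ≤ θ) (hρ : ∀ j, 0 ≤ ρ j) (j : ℤ) : |intR θ ρ j| ≤ (1 + θ) * ρ j := by
  have := abs_slp_le hθ hρ j
  calc |intR θ ρ j| ≤ |ρ j| + |slp θ ρ j| / 2 := by
        rw [intR, ← abs_two, ← abs_div, abs_two]; exact abs_sub _ _
    _ ≤ (1 + θ) * ρ j := by rw [abs_of_nonneg (hρ j)]; linarith

end Reconstruction

lemma abs_le_mul_abs_of_abs_deriv_le {g : ℝ → ℝ} {L : ℝ} (hg : Differentiable ℝ g) (hg0 : g 0 = 0)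
    (hL : ∀ x, |deriv g x| ≤ L) (u : ℝ) : |g u| ≤ L * |u| := by
  simpa [hg0] using Convex.norm_image_sub_le_of_norm_deriv_le (fun x _ => hg x) (fun x _ => hL x)
    convex_univ (Set.mem_univ 0) (Set.mem_univ u)

lemma abs_sub_half_mul_sub_le {u a b lam M K : ℝ} (hlam : 0 ≤ lam) (hu : |u| ≤ M)
    (ha : |a| ≤ K) (hb : |b| ≤ K) : |u - lam / 2 * (a - b)| ≤ M + lam * K := by
  calc |u - lam / 2 * (a - b)| ≤ |u| + lam / 2 * (|a| + |b|) := by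
        grw [abs_sub, abs_mul, abs_of_nonneg (by positivity : 0 ≤ lam / 2), abs_sub]
    _ ≤ M + lam * K := by nlinarith

theorem stmt3_general (f : ℝ → ℝ → ℝ) (μ : ℝ → ℝ) (Δx Δt lam θ L : ℝ)
    (hΔx : 0 < Δx) (hΔt : 0 < Δt) (hlam : lam = Δt / Δx)
    (hθ0 : 0 ≤ θ)
    (hf : ContDiff ℝ 2 (Function.uncurry f)) (hf0 : ∀ A : ℝ, f 0 A = 0)
    (hL : ∀ r A : ℝ, |deriv (fun x => f x A) r| ≤ L)
    (ρ : ℤ → ℝ) (hρ : ∀ j : ℤ, 0 ≤ ρ j) (j : ℤ) :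
    |midL f μ θ lam Δx ρ j| ≤ (1 + θ) * (1 + lam * L) * ρ j ∧
    |midR f μ θ lam Δx ρ j| ≤ (1 + θ) * (1 + lam * L) * ρ j := by
  have hlam0 : 0 ≤ lam := hlam ▸ by positivity
  have hL0 : 0 ≤ L := (abs_nonneg _).trans (hL 0 0)
  have hflux : ∀ u A, |u| ≤ (1 + θ) * ρ j → |f u A| ≤ L * ((1 + θ) * ρ j) := fun u A hu =>
    have hfA : Differentiable ℝ (fun x => f x A) :=
      (hf.differentiable (by norm_num)).comp (differentiable_id.prodMk (differentiable_const A))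
    (abs_le_mul_abs_of_abs_deriv_le hfA (hf0 A) (hL · A) u).trans
      (mul_le_mul_of_nonneg_left hu hL0)
  have hL' := hflux _ (AdiscL μ θ Δx ρ j) (abs_intL_le hθ0 hρ j)
  have hR' := hflux _ (AdiscR μ θ Δx ρ j) (abs_intR_le hθ0 hρ j)
  constructor
  · exact (abs_sub_half_mul_sub_le hlam0 (abs_intL_le hθ0 hρ j) hL' hR').trans_eq (by ring)
  · exact (abs_sub_half_mul_sub_le hlam0 (abs_intR_le hθ0 hρ j) hL' hR').trans_eq (by ring)

/-- bound on the mid-time density values. -/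
theorem stmt3 (f : ℝ → ℝ → ℝ) (μ : ℝ → ℝ) (Δx Δt lam θ α L : ℝ)
    (hΔx : 0 < Δx) (hΔt : 0 < Δt) (hlam : lam = Δt / Δx)
    (hθ0 : 0 ≤ θ) (hθ1 : θ ≤ 1 / 2) (hα0 : 0 < α) (hα1 : α < 8 / 27)
    (hf : ContDiff ℝ 2 (Function.uncurry f)) (hf0 : ∀ A : ℝ, f 0 A = 0)
    (hL : ∀ r A : ℝ, |deriv (fun x => f x A) r| ≤ L)
    (hμ : ContDiff ℝ 2 μ) (hμc : HasCompactSupport μ)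
    (ρ : ℤ → ℝ) (hρ : ∀ j : ℤ, 0 ≤ ρ j) (hsum : Summable ρ) (j : ℤ) :
    |midL f μ θ lam Δx ρ j| ≤ (1 + θ) * (1 + lam * L) * ρ j ∧
    |midR f μ θ lam Δx ρ j| ≤ (1 + θ) * (1 + lam * L) * ρ j :=
  stmt3_general f μ Δx Δt lam θ L hΔx hΔt hlam hθ0 hf hf0 hL ρ hρ j
end
end

section
/- Define, for each j ∈ ℤ, c_{j−1/2} := −(λ/2)·(f(ρ⁻_{j+1/2}, A⁻_{j+1/2}) − f(ρ⁺_{j−1/2}, A⁺_{j−1/2})) + (λ/2)·(f(ρ⁻_{j−1/2}, A⁻_{j−1/2}) − f(ρ⁺_{j−3/2}, A⁺_{j−3/2})). Then |c_{j−1/2}| ≤ λ·L·(1 + θ)·(ρ_j + ρ_{j−1}) for every j ∈ ℤ. -/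
open MeasureTheory

noncomputable section

lemma fbound_aux (f : ℝ → ℝ → ℝ) (L : ℝ)
    (hf : ContDiff ℝ 2 (Function.uncurry f)) (hf0 : ∀ A : ℝ, f 0 A = 0)
    (hL : ∀ r A : ℝ, |deriv (fun x => f x A) r| ≤ L)
    (u A : ℝ) : |f u A| ≤ L * |u| := by
  have hdiff : ∀ x : ℝ, DifferentiableAt ℝ (fun x => f x A) x := by
    intro x
    have : DifferentiableAt ℝ (Function.uncurry f ∘ fun x : ℝ => (x, A)) x :=
      ((hf.differentiable (by norm_num)) (x, A)).comp x
        ((differentiableAt_id.prodMk (differentiableAt_const A)))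
    exact this
  have := convex_univ.norm_image_sub_le_of_norm_deriv_le (f := fun x => f x A)
    (fun x _ => hdiff x) (fun x _ => hL x A) (Set.mem_univ 0) (Set.mem_univ u)
  simpa [hf0 A] using this

lemma slpb_aux (θ : ℝ) (ρ : ℤ → ℝ) (j : ℤ) (hθ0 : 0 ≤ θ) (hθ1 : θ ≤ 1 / 2)
    (hρ : ∀ j : ℤ, 0 ≤ ρ j) : |slp θ ρ j / 2| ≤ ρ j := by
  have h1 := hρ (j - 1); have h2 := hρ j; have h3 := hρ (j + 1)
  unfold slp minmod3
  split_ifs with hp hn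
  · have hm : 0 < min (ρ j - ρ (j-1)) (min ((ρ (j+1) - ρ (j-1))/2) (ρ (j+1) - ρ j)) :=
      lt_min hp.1 (lt_min hp.2.1 hp.2.2)
    rw [abs_of_nonneg (by positivity)]
    nlinarith [min_le_left (ρ j - ρ (j-1)) (min ((ρ (j+1) - ρ (j-1))/2) (ρ (j+1) - ρ j))]
  · have hm : max (ρ j - ρ (j-1)) (max ((ρ (j+1) - ρ (j-1))/2) (ρ (j+1) - ρ j)) < 0 :=
      max_lt hn.1 (max_lt hn.2.1 hn.2.2)
    rw [abs_of_nonpos (by nlinarith)]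
    nlinarith [le_max_right (ρ j - ρ (j-1)) (max ((ρ (j+1) - ρ (j-1))/2) (ρ (j+1) - ρ j)),
      le_max_right ((ρ (j+1) - ρ (j-1))/2) (ρ (j+1) - ρ j)]
  · simpa using h2

/-- bound on the predictor flux-difference term `c_{j−1/2}`. -/
theorem stmt12 (f : ℝ → ℝ → ℝ) (μ : ℝ → ℝ) (Δx Δt lam θ L : ℝ)
    (hΔx : 0 < Δx) (hΔt : 0 < Δt) (hlam : lam = Δt / Δx)
    (hθ0 : 0 ≤ θ) (hθ1 : θ ≤ 1 / 2)
    (hf : ContDiff ℝ 2 (Function.uncurry f)) (hf0 : ∀ A : ℝ, f 0 A = 0)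
    (hL : ∀ r A : ℝ, |deriv (fun x => f x A) r| ≤ L)
    (hμ : ContDiff ℝ 2 μ) (hμc : HasCompactSupport μ)
    (ρ : ℤ → ℝ) (hρ : ∀ j : ℤ, 0 ≤ ρ j) (hsum : Summable ρ) (j : ℤ) :
    |-(lam / 2) * (f (intL θ ρ j) (AdiscL μ θ Δx ρ j) -
        f (intR θ ρ j) (AdiscR μ θ Δx ρ j)) +
      lam / 2 * (f (intL θ ρ (j - 1)) (AdiscL μ θ Δx ρ (j - 1)) -
        f (intR θ ρ (j - 1)) (AdiscR μ θ Δx ρ (j - 1)))| ≤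
      lam * L * (1 + θ) * (ρ j + ρ (j - 1)) := by
  have hlam0 : 0 ≤ lam := by rw [hlam]; positivity
  have hL0 : 0 ≤ L := le_trans (abs_nonneg _) (hL 0 0)
  have key : ∀ k : ℤ, |f (intL θ ρ k) (AdiscL μ θ Δx ρ k)| +
      |f (intR θ ρ k) (AdiscR μ θ Δx ρ k)| ≤ L * (2 * ρ k) := by
    intro k
    have hs := abs_le.mp (slpb_aux θ ρ k hθ0 hθ1 hρ)
    have hIL : 0 ≤ intL θ ρ k := by unfold intL; linarith [hs.1]
    have hIR : 0 ≤ intR θ ρ k := by unfold intR; linarith [hs.2]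
    have h1 := fbound_aux f L hf hf0 hL (intL θ ρ k) (AdiscL μ θ Δx ρ k)
    have h2 := fbound_aux f L hf hf0 hL (intR θ ρ k) (AdiscR μ θ Δx ρ k)
    rw [abs_of_nonneg hIL] at h1
    rw [abs_of_nonneg hIR] at h2
    have hsum2 : intL θ ρ k + intR θ ρ k = 2 * ρ k := by unfold intL intR; ring
    nlinarith
  have hkj := key j
  have hkj1 := key (j - 1)
  set a := f (intL θ ρ j) (AdiscL μ θ Δx ρ j)
  set b := f (intR θ ρ j) (AdiscR μ θ Δx ρ j)
  set c := f (intL θ ρ (j - 1)) (AdiscL μ θ Δx ρ (j - 1))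
  set d := f (intR θ ρ (j - 1)) (AdiscR μ θ Δx ρ (j - 1))
  calc |(-(lam / 2)) * (a - b) + lam / 2 * (c - d)|
      ≤ |(-(lam / 2)) * (a - b)| + |lam / 2 * (c - d)| := abs_add_le _ _
    _ = lam / 2 * |a - b| + lam / 2 * |c - d| := by
        rw [abs_mul, abs_mul, abs_neg, abs_of_nonneg (by linarith : (0:ℝ) ≤ lam / 2)]
    _ ≤ lam / 2 * (|a| + |b|) + lam / 2 * (|c| + |d|) := by
        gcongr <;> exact abs_sub _ _
    _ ≤ lam / 2 * (L * (2 * ρ j)) + lam / 2 * (L * (2 * ρ (j - 1))) := by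
        have h2 : (0:ℝ) ≤ lam / 2 := by linarith
        gcongr
    _ ≤ lam * L * (1 + θ) * (ρ j + ρ (j - 1)) := by
        nlinarith [mul_nonneg (mul_nonneg (mul_nonneg hlam0 hL0) hθ0)
          (add_nonneg (hρ j) (hρ (j - 1)))]
end
end

section
/- If the CFL condition λ ≤ min{(8 − 27α)/(27L), 2/(27L), α/L} holds, then for every j ∈ ℤ the flux difference at fixed mid-time density arguments satisfies λ·|F(ρ^{½,−}_{j+1/2}, ρ^{½,+}_{j−1/2}, A^{½}_{j−1/2}) − F(ρ^{½,−}_{j+1/2}, ρ^{½,+}_{j−1/2}, A^{½}_{j+1/2})| ≤ (1/3)·ρ_j. -/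
open MeasureTheory

noncomputable section

lemma aux_minmod (a b c M : ℝ) (hM : 0 ≤ M) (ha : a ≤ M) (hc : -M ≤ c) :
    |minmod3 a b c| ≤ M := by
  unfold minmod3
  split_ifs with h1 h2
  · rw [abs_le]
    constructor
    · have : 0 < min a (min b c) := lt_min h1.1 (lt_min h1.2.1 h1.2.2)
      linarith
    · exact le_trans (min_le_left _ _) ha
  · rw [abs_le]
    constructor
    · exact le_trans hc (le_trans (le_max_right b c) (le_max_right a _))
    · have : max a (max b c) < 0 := max_lt h2.1 (max_lt h2.2.1 h2.2.2)
      linarith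
  · simpa using hM

lemma aux_slp (θ : ℝ) (ρ : ℤ → ℝ) (hθ0 : 0 ≤ θ) (hθ1 : θ ≤ 1 / 2)
    (hρ : ∀ j, 0 ≤ ρ j) (j : ℤ) : |slp θ ρ j| ≤ ρ j := by
  have hm : |minmod3 (ρ j - ρ (j - 1)) ((ρ (j + 1) - ρ (j - 1)) / 2) (ρ (j + 1) - ρ j)| ≤ ρ j :=
    aux_minmod _ _ _ _ (hρ j) (by linarith [hρ (j - 1)]) (by linarith [hρ (j + 1)])
  rw [slp, abs_mul, abs_of_nonneg (by linarith : (0:ℝ) ≤ 2 * θ)]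
  nlinarith [hm, abs_nonneg (minmod3 (ρ j - ρ (j - 1)) ((ρ (j + 1) - ρ (j - 1)) / 2)
    (ρ (j + 1) - ρ j))]

lemma aux_fbound (f : ℝ → ℝ → ℝ) (L : ℝ) (hf : ContDiff ℝ 2 (Function.uncurry f))
    (hf0 : ∀ A : ℝ, f 0 A = 0) (hL : ∀ r A : ℝ, |deriv (fun x => f x A) r| ≤ L) :
    ∀ r A : ℝ, |f r A| ≤ L * |r| := by
  intro r A
  have hL0 : 0 ≤ L := le_trans (abs_nonneg _) (hL 0 0)
  have hg : Differentiable ℝ (fun x => f x A) :=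
    (hf.differentiable (by norm_num)).comp (differentiable_id.prodMk (differentiable_const A))
  have hlip : LipschitzWith L.toNNReal (fun x => f x A) := by
    apply lipschitzWith_of_nnnorm_deriv_le hg
    intro x
    rw [← NNReal.coe_le_coe]
    simpa [Real.coe_toNNReal _ hL0] using hL x A
  have := hlip.dist_le_mul r 0
  simpa [Real.dist_eq, hf0 A, Real.coe_toNNReal _ hL0] using this

set_option maxHeartbeats 1000000 in
/-- bound on the flux difference at fixed mid-time density arguments. -/
theorem stmt13 (f : ℝ → ℝ → ℝ) (μ : ℝ → ℝ) (Δx Δt lam θ α L : ℝ)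
    (hΔx : 0 < Δx) (hΔt : 0 < Δt) (hlam : lam = Δt / Δx)
    (hθ0 : 0 ≤ θ) (hθ1 : θ ≤ 1 / 2) (hα0 : 0 < α) (hα1 : α < 8 / 27)
    (hf : ContDiff ℝ 2 (Function.uncurry f)) (hf0 : ∀ A : ℝ, f 0 A = 0)
    (hL : ∀ r A : ℝ, |deriv (fun x => f x A) r| ≤ L)
    (hμ : ContDiff ℝ 2 μ) (hμc : HasCompactSupport μ)
    (hCFL : lam ≤ min ((8 - 27 * α) / (27 * L)) (min (2 / (27 * L)) (α / L)))
    (ρ : ℤ → ℝ) (hρ : ∀ j : ℤ, 0 ≤ ρ j) (hsum : Summable ρ) (j : ℤ) :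
    lam * |numFlux f α lam (midL f μ θ lam Δx ρ j) (midR f μ θ lam Δx ρ j)
        (Amid f μ θ lam Δx ρ (j - 1)) -
      numFlux f α lam (midL f μ θ lam Δx ρ j) (midR f μ θ lam Δx ρ j)
        (Amid f μ θ lam Δx ρ j)| ≤ (1 / 3) * ρ j := by
  have hL0 : 0 ≤ L := le_trans (abs_nonneg _) (hL 0 0)
  have hlam0 : 0 < lam := by rw [hlam]; positivity
  have hCFL2 : lam ≤ 2 / (27 * L) :=
    le_trans hCFL (le_trans (min_le_right _ _) (min_le_left _ _))
  have hLpos : 0 < L := by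
    rcases hL0.lt_or_eq with h | h
    · exact h
    · exfalso
      rw [← h] at hCFL2
      norm_num at hCFL2
      linarith
  have hlamL : lam * L ≤ 2 / 27 := by
    rw [le_div_iff₀ (by positivity : (0:ℝ) < 27 * L)] at hCFL2
    nlinarith
  have hfb : ∀ r A : ℝ, |f r A| ≤ L * |r| := aux_fbound f L hf hf0 hL
  have hslp := abs_le.mp (aux_slp θ ρ hθ0 hθ1 hρ j)
  have hintL : |intL θ ρ j| ≤ 3 / 2 * ρ j := by
    rw [intL, abs_le]
    constructor <;> [linarith [hρ j]; linarith [hρ j]]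
  have hintR : |intR θ ρ j| ≤ 3 / 2 * ρ j := by
    rw [intR, abs_le]
    constructor <;> [linarith [hρ j]; linarith [hρ j]]
  set D : ℝ := f (intL θ ρ j) (AdiscL μ θ Δx ρ j) - f (intR θ ρ j) (AdiscR μ θ Δx ρ j)
    with hDdef
  have hA1 : |f (intL θ ρ j) (AdiscL μ θ Δx ρ j)| ≤ L * (3 / 2 * ρ j) :=
    le_trans (hfb _ _) (mul_le_mul_of_nonneg_left hintL hL0)
  have hA2 : |f (intR θ ρ j) (AdiscR μ θ Δx ρ j)| ≤ L * (3 / 2 * ρ j) :=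
    le_trans (hfb _ _) (mul_le_mul_of_nonneg_left hintR hL0)
  have hD : |D| ≤ 3 * L * ρ j := by
    rw [abs_le] at hA1 hA2 ⊢
    constructor <;> [nlinarith [hA1.1, hA2.2]; nlinarith [hA1.2, hA2.1]]
  have hDD : |lam / 2 * D| ≤ 1 / 9 * ρ j := by
    rw [abs_mul, abs_of_nonneg (by linarith : (0:ℝ) ≤ lam / 2)]
    calc lam / 2 * |D| ≤ lam / 2 * (3 * L * ρ j) :=
          mul_le_mul_of_nonneg_left hD (by linarith)
      _ ≤ 1 / 9 * ρ j := by nlinarith [mul_le_mul_of_nonneg_right hlamL (hρ j)]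
  have hDD' := abs_le.mp hDD
  have hintL' := abs_le.mp hintL
  have hintR' := abs_le.mp hintR
  have hu : |midL f μ θ lam Δx ρ j| ≤ 29 / 18 * ρ j := by
    rw [midL, ← hDdef, abs_le]
    constructor <;> linarith [hDD'.1, hDD'.2, hintL'.1, hintL'.2]
  have hv : |midR f μ θ lam Δx ρ j| ≤ 29 / 18 * ρ j := by
    rw [midR, ← hDdef, abs_le]
    constructor <;> linarith [hDD'.1, hDD'.2, hintR'.1, hintR'.2]
  set u : ℝ := midL f μ θ lam Δx ρ j
  set v : ℝ := midR f μ θ lam Δx ρ j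
  set A1 : ℝ := Amid f μ θ lam Δx ρ (j - 1)
  set A2 : ℝ := Amid f μ θ lam Δx ρ j
  have habs : |numFlux f α lam u v A1 - numFlux f α lam u v A2| ≤ L * (|u| + |v|) := by
    have he : numFlux f α lam u v A1 - numFlux f α lam u v A2 =
        ((f u A1 - f u A2) + (f v A1 - f v A2)) / 2 := by
      rw [numFlux, numFlux]; ring
    have h1 := abs_le.mp (hfb u A1)
    have h2 := abs_le.mp (hfb u A2)
    have h3 := abs_le.mp (hfb v A1)
    have h4 := abs_le.mp (hfb v A2)
    rw [he, abs_le]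
    constructor <;> linarith [h1.1, h1.2, h2.1, h2.2, h3.1, h3.2, h4.1, h4.2]
  have hsum2 : |u| + |v| ≤ 29 / 9 * ρ j := by linarith
  calc lam * |numFlux f α lam u v A1 - numFlux f α lam u v A2|
      ≤ lam * (L * (|u| + |v|)) := mul_le_mul_of_nonneg_left habs hlam0.le
    _ = lam * L * (|u| + |v|) := by ring
    _ ≤ 2 / 27 * (29 / 9 * ρ j) :=
        mul_le_mul hlamL hsum2 (by positivity) (by norm_num)
    _ ≤ 1 / 3 * ρ j := by nlinarith [hρ j]
end
end

section
/- For every j ∈ ℤ the discrete convolutions satisfy: (i) |A_j − A_{j−1}| ≤ Δx·(sup |μ'|)·m; (ii) |s_j − s_{j−1}| ≤ 2θ·Δx·(sup |μ'|)·m; and (iii) |A⁻_{j+1/2} − A⁻_{j−1/2}| ≤ (1 + θ)·Δx·(sup |μ'|)·m and |A⁺_{j−1/2} − A⁺_{j−3/2}| ≤ (1 + θ)·Δx·(sup |μ'|)·m. -/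
/-!
By the mean value theorem, shifting the kernel by one cell changes each term of `A_j` by at most
`Δx · sup |μ'| · ρ_l`, which summed over `l` gives the bound on `A_j − A_{j−1}`. The other bounds
follow from it by the triangle inequality, since
`s_j − s_{j−1} = θ((A_{j+1} − A_j) − (A_{j−1} − A_{j−2}))`.
-/

open MeasureTheory

noncomputable section

theorem summable_mul_of_abs_le {ι : Type*} {f ρ : ι → ℝ} {K : ℝ} (hf : ∀ l, |f l| ≤ K)
    (hρ : ∀ l, 0 ≤ ρ l) (hsum : Summable ρ) : Summable fun l => f l * ρ l :=
  (hsum.mul_left K).of_norm_bounded fun l => by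
    rw [norm_mul, Real.norm_eq_abs, Real.norm_of_nonneg (hρ l)]
    exact mul_le_mul_of_nonneg_right (hf l) (hρ l)

theorem Adisc_sub_Adisc {μ : ℝ → ℝ} {K : ℝ} (hK : ∀ x, |μ x| ≤ K) (Δx : ℝ) {ρ : ℤ → ℝ}
    (hρ : ∀ l, 0 ≤ ρ l) (hsum : Summable ρ) (j k : ℤ) :
    Adisc μ Δx ρ j - Adisc μ Δx ρ k =
      Δx * ∑' l : ℤ, (μ ((j - l) * Δx) - μ ((k - l) * Δx)) * ρ l := by
  have hsummable (i : ℤ) : Summable fun l : ℤ => μ ((i - l) * Δx) * ρ l :=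
    summable_mul_of_abs_le (fun _ => hK _) hρ hsum
  rw [Adisc, Adisc, ← mul_sub, ← (hsummable j).tsum_sub (hsummable k)]
  simp only [sub_mul]

theorem abs_Adisc_sub_le {μ : ℝ → ℝ} {Δx C K : ℝ} (hΔx : 0 ≤ Δx) (hμ : Differentiable ℝ μ)
    (hμ' : ∀ x, |deriv μ x| ≤ C) (hK : ∀ x, |μ x| ≤ K) {ρ : ℤ → ℝ} (hρ : ∀ l, 0 ≤ ρ l)
    (hsum : Summable ρ) (j k : ℤ) :
    |Adisc μ Δx ρ j - Adisc μ Δx ρ k| ≤ C * (|(j : ℝ) - k| * Δx) * (Δx * ∑' l : ℤ, ρ l) := by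
  have hlip (x y : ℝ) : |μ x - μ y| ≤ C * |x - y| :=
    convex_univ.norm_image_sub_le_of_norm_deriv_le (fun z _ => hμ z) (fun z _ => hμ' z)
      (Set.mem_univ y) (Set.mem_univ x)
  have hterm (l : ℤ) : ‖(μ ((j - l) * Δx) - μ ((k - l) * Δx)) * ρ l‖ ≤
      C * (|(j : ℝ) - k| * Δx) * ρ l := by
    rw [norm_mul, Real.norm_eq_abs, Real.norm_of_nonneg (hρ l)]
    refine mul_le_mul_of_nonneg_right ?_ (hρ l)
    calc |μ ((j - l) * Δx) - μ ((k - l) * Δx)|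
        ≤ C * |(j - l) * Δx - (k - l) * Δx| := hlip _ _
      _ = C * (|(j : ℝ) - k| * Δx) := by
        rw [← sub_mul, sub_sub_sub_cancel_right, abs_mul, abs_of_nonneg hΔx]
  have hsum_le := tsum_of_norm_bounded (hsum.hasSum.mul_left (C * (|(j : ℝ) - k| * Δx))) hterm
  rw [Adisc_sub_Adisc hK Δx hρ hsum, abs_mul, abs_of_nonneg hΔx, ← Real.norm_eq_abs]
  calc Δx * ‖∑' l : ℤ, (μ ((j - l) * Δx) - μ ((k - l) * Δx)) * ρ l‖
      ≤ Δx * (C * (|(j : ℝ) - k| * Δx) * ∑' l : ℤ, ρ l) :=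
        mul_le_mul_of_nonneg_left hsum_le hΔx
    _ = C * (|(j : ℝ) - k| * Δx) * (Δx * ∑' l : ℤ, ρ l) := by ring

section Increments

variable {μ : ℝ → ℝ} {θ Δx B : ℝ} {ρ : ℤ → ℝ}

theorem abs_sdisc_sub_pred_le (hA : ∀ k : ℤ, |Adisc μ Δx ρ k - Adisc μ Δx ρ (k - 1)| ≤ B)
    (hθ : 0 ≤ θ) (j : ℤ) :
    |sdisc μ θ Δx ρ j - sdisc μ θ Δx ρ (j - 1)| ≤ 2 * θ * B := by
  have hsplit : sdisc μ θ Δx ρ j - sdisc μ θ Δx ρ (j - 1) =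
      θ * ((Adisc μ Δx ρ (j + 1) - Adisc μ Δx ρ (j + 1 - 1)) -
        (Adisc μ Δx ρ (j - 1) - Adisc μ Δx ρ (j - 1 - 1))) := by
    simp only [sdisc, add_sub_cancel_right, sub_add_cancel]
    ring
  rw [hsplit, abs_mul, abs_of_nonneg hθ]
  calc θ * |(Adisc μ Δx ρ (j + 1) - Adisc μ Δx ρ (j + 1 - 1)) -
        (Adisc μ Δx ρ (j - 1) - Adisc μ Δx ρ (j - 1 - 1))|
      ≤ θ * (B + B) :=
        mul_le_mul_of_nonneg_left ((abs_sub _ _).trans (add_le_add (hA _) (hA _))) hθ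
    _ = 2 * θ * B := by ring

theorem abs_AdiscL_sub_pred_le (hA : ∀ k : ℤ, |Adisc μ Δx ρ k - Adisc μ Δx ρ (k - 1)| ≤ B)
    (hθ : 0 ≤ θ) (j : ℤ) :
    |AdiscL μ θ Δx ρ j - AdiscL μ θ Δx ρ (j - 1)| ≤ (1 + θ) * B := by
  have hsplit : AdiscL μ θ Δx ρ j - AdiscL μ θ Δx ρ (j - 1) =
      (Adisc μ Δx ρ j - Adisc μ Δx ρ (j - 1)) +
        (sdisc μ θ Δx ρ j - sdisc μ θ Δx ρ (j - 1)) / 2 := by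
    simp only [AdiscL]
    ring
  rw [hsplit]
  have hs := abs_sdisc_sub_pred_le hA hθ j
  calc _ ≤ |Adisc μ Δx ρ j - Adisc μ Δx ρ (j - 1)| +
        |sdisc μ θ Δx ρ j - sdisc μ θ Δx ρ (j - 1)| / 2 := by
        rw [← abs_two, ← abs_div, abs_two]; exact abs_add_le _ _
    _ ≤ (1 + θ) * B := by linarith [hA j]

theorem abs_AdiscR_sub_pred_le (hA : ∀ k : ℤ, |Adisc μ Δx ρ k - Adisc μ Δx ρ (k - 1)| ≤ B)
    (hθ : 0 ≤ θ) (j : ℤ) :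
    |AdiscR μ θ Δx ρ j - AdiscR μ θ Δx ρ (j - 1)| ≤ (1 + θ) * B := by
  have hsplit : AdiscR μ θ Δx ρ j - AdiscR μ θ Δx ρ (j - 1) =
      (Adisc μ Δx ρ j - Adisc μ Δx ρ (j - 1)) -
        (sdisc μ θ Δx ρ j - sdisc μ θ Δx ρ (j - 1)) / 2 := by
    simp only [AdiscR]
    ring
  rw [hsplit]
  have hs := abs_sdisc_sub_pred_le hA hθ j
  calc _ ≤ |Adisc μ Δx ρ j - Adisc μ Δx ρ (j - 1)| +
        |sdisc μ θ Δx ρ j - sdisc μ θ Δx ρ (j - 1)| / 2 := by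
        rw [← abs_two, ← abs_div, abs_two]; exact abs_sub _ _
    _ ≤ (1 + θ) * B := by linarith [hA j]

end Increments

theorem stmt14_general (μ : ℝ → ℝ) (Δx θ Cμ' : ℝ)
    (hΔx : 0 < Δx) (hθ0 : 0 ≤ θ)
    (hμ : ContDiff ℝ 2 μ) (hμc : HasCompactSupport μ)
    (hCμ' : ∀ x : ℝ, |deriv μ x| ≤ Cμ')
    (ρ : ℤ → ℝ) (hρ : ∀ j : ℤ, 0 ≤ ρ j) (hsum : Summable ρ) (j : ℤ) :
    |Adisc μ Δx ρ j - Adisc μ Δx ρ (j - 1)| ≤ Δx * Cμ' * (Δx * ∑' l : ℤ, ρ l) ∧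
    |sdisc μ θ Δx ρ j - sdisc μ θ Δx ρ (j - 1)| ≤
      2 * θ * Δx * Cμ' * (Δx * ∑' l : ℤ, ρ l) ∧
    |AdiscL μ θ Δx ρ j - AdiscL μ θ Δx ρ (j - 1)| ≤
      (1 + θ) * Δx * Cμ' * (Δx * ∑' l : ℤ, ρ l) ∧
    |AdiscR μ θ Δx ρ j - AdiscR μ θ Δx ρ (j - 1)| ≤
      (1 + θ) * Δx * Cμ' * (Δx * ∑' l : ℤ, ρ l) := by
  obtain ⟨K, hK⟩ := hμc.exists_bound_of_continuous hμ.continuous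
  have hA (k : ℤ) :
      |Adisc μ Δx ρ k - Adisc μ Δx ρ (k - 1)| ≤ Δx * Cμ' * (Δx * ∑' l : ℤ, ρ l) := by
    have h := abs_Adisc_sub_le hΔx.le (hμ.differentiable (by norm_num)) hCμ' hK hρ hsum k (k - 1)
    rwa [Int.cast_sub, Int.cast_one, sub_sub_cancel, abs_one, one_mul, mul_comm Cμ'] at h
  refine ⟨hA j, ?_, ?_, ?_⟩
  · simpa only [mul_assoc] using abs_sdisc_sub_pred_le hA hθ0 j
  · simpa only [mul_assoc] using abs_AdiscL_sub_pred_le hA hθ0 j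
  · simpa only [mul_assoc] using abs_AdiscR_sub_pred_le hA hθ0 j

/-- Lipschitz bounds on the discrete convolutions. -/
theorem stmt14 (μ : ℝ → ℝ) (Δx θ Cμ' : ℝ)
    (hΔx : 0 < Δx) (hθ0 : 0 ≤ θ) (hθ1 : θ ≤ 1 / 2)
    (hμ : ContDiff ℝ 2 μ) (hμc : HasCompactSupport μ)
    (hCμ' : ∀ x : ℝ, |deriv μ x| ≤ Cμ')
    (ρ : ℤ → ℝ) (hρ : ∀ j : ℤ, 0 ≤ ρ j) (hsum : Summable ρ) (j : ℤ) :
    |Adisc μ Δx ρ j - Adisc μ Δx ρ (j - 1)| ≤ Δx * Cμ' * (Δx * ∑' l : ℤ, ρ l) ∧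
    |sdisc μ θ Δx ρ j - sdisc μ θ Δx ρ (j - 1)| ≤
      2 * θ * Δx * Cμ' * (Δx * ∑' l : ℤ, ρ l) ∧
    |AdiscL μ θ Δx ρ j - AdiscL μ θ Δx ρ (j - 1)| ≤
      (1 + θ) * Δx * Cμ' * (Δx * ∑' l : ℤ, ρ l) ∧
    |AdiscR μ θ Δx ρ j - AdiscR μ θ Δx ρ (j - 1)| ≤
      (1 + θ) * Δx * Cμ' * (Δx * ∑' l : ℤ, ρ l) :=
  stmt14_general μ Δx θ Cμ' hΔx hθ0 hμ hμc hCμ' ρ hρ hsum j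
end
end
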